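/- Renormalization of the Arnoux–Yoccoz interval exchange (Arnoux–Yoccoz): let g ≥ 2, let IE be the Arnoux–Yoccoz interval exchange, and define the first return map ĨE : [0,α) → [0,α) by ĨE(s) = IE(s) if IE(s) < α and ĨE(s) = IE(IE(s)) otherwise. Then for every s ∈ [0, α), ψ(ĨE(s)) = IE(ψ(s)), where ψ(s) = fract(α⁻¹ s + (α⁻¹ − 1)/2). -/

import Mathlib

/-- The partial sum `α + α² + ⋯ + α^k`.  The interval `J_k` of the Arnoux–Yoccoz
partition of `[0,1)` is `[aySum α (k-1), aySum α k)`. -/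
noncomputable def aySum (α : ℝ) (k : ℕ) : ℝ := ∑ j ∈ Finset.Icc 1 k, α ^ j

/-- The index `k ≥ 1` such that `t` lies in `J_k = [aySum α (k-1), aySum α k)`
(the least `k` with `t < aySum α k`). -/
noncomputable def ayIdx (α : ℝ) (t : ℝ) : ℕ := sInf {k : ℕ | t < aySum α k}

/-- The first involution `I₁`, rotating each interval `J_k` halfway around:
`I₁ t = t + α^k/2` if this value lies in `J_k`, and `t - α^k/2` otherwise,
where `k` is the index with `t ∈ J_k`. -/
noncomputable def ayI1 (α : ℝ) (t : ℝ) : ℝ :=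
  if t + α ^ ayIdx α t / 2 ∈ Set.Ico (aySum α (ayIdx α t - 1)) (aySum α (ayIdx α t)) then
    t + α ^ ayIdx α t / 2
  else
    t - α ^ ayIdx α t / 2

/-- The second involution `I₂ : t ↦ t + 1/2 (mod 1)`, rotating `[0,1)` halfway around. -/
noncomputable def ayI2 (t : ℝ) : ℝ := Int.fract (t + 1 / 2)

/-- The Arnoux–Yoccoz interval exchange transformation `IE = I₂ ∘ I₁` on `[0,1)`. -/
noncomputable def ayIE (α : ℝ) (t : ℝ) : ℝ := ayI2 (ayI1 α t)


/-- The renormalizing map `ψ(s) = α⁻¹ s + (α⁻¹ − 1)/2 (mod 1)`. -/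
noncomputable def ayPsi (α : ℝ) (s : ℝ) : ℝ := Int.fract (α⁻¹ * s + (α⁻¹ - 1) / 2)

/-- The first return map `ĨE` of `IE` to `[0, α)`:
`ĨE(s) = IE(s)` if `IE(s) < α`, and `ĨE(s) = IE(IE(s))` otherwise. -/
noncomputable def ayIEhat (α : ℝ) (s : ℝ) : ℝ :=
  if ayIE α s < α then ayIE α s else ayIE α (ayIE α s)

/-! Write `β = α⁻¹`. The relation `α + ⋯ + α^g = 1` gives `β = 2 - α^g`, and the map
`t ↦ α t + α` sends `J_k` onto `J_{k+1}`, conjugating `I₁` there. If `IE(s) < α`, then `ψ(s)` lies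
in the last interval `J_g`, and both sides agree modulo `1` because `β + α^g = 2`. Otherwise
`IE(s) = α ψ(s) + α` with `ψ(s) ∈ J_1 ∪ ⋯ ∪ J_{g-1}`, so `IE(IE(s)) = α I₁(ψ(s)) + α - 1/2`,
which `ψ` maps to `I₂(I₁(ψ(s)))`. -/

open Set

lemma Int.fract_eq_sub_one {R : Type*} [Ring R] [LinearOrder R] [IsStrictOrderedRing R]
    [FloorRing R] {x : R} (h₁ : 1 ≤ x) (h₂ : x < 2) : Int.fract x = x - 1 := by
  rw [← Int.fract_sub_one, Int.fract_eq_self]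
  exact ⟨sub_nonneg.2 h₁, sub_lt_iff_lt_add.2 (by rwa [one_add_one_eq_two])⟩

section ArnouxYoccoz

variable {α s t : ℝ} {k n : ℕ}

@[simp] lemma aySum_zero (α : ℝ) : aySum α 0 = 0 := by simp [aySum]

lemma aySum_succ (α : ℝ) (k : ℕ) : aySum α (k + 1) = aySum α k + α ^ (k + 1) :=
  Finset.sum_Icc_succ_top (by omega) _

lemma aySum_nonneg (hα : 0 ≤ α) (k : ℕ) : 0 ≤ aySum α k :=
  Finset.sum_nonneg fun i _ => pow_nonneg hα i

lemma aySum_mono (hα : 0 ≤ α) : Monotone (aySum α) := fun _ _ h =>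
  Finset.sum_le_sum_of_subset_of_nonneg (Finset.Icc_subset_Icc_right h)
    fun i _ _ => pow_nonneg hα i

lemma mul_aySum_add (α : ℝ) (k : ℕ) : α * aySum α k + α = aySum α (k + 1) := by
  induction k with
  | zero => simp [aySum]
  | succ k ih => rw [aySum_succ, aySum_succ α (k + 1), ← ih]; ring

lemma exists_mem_Ico_aySum (ht : 0 ≤ t) (htn : t < aySum α n) :
    ∃ k < n, t ∈ Ico (aySum α k) (aySum α (k + 1)) := by
  induction n with
  | zero => exact absurd htn (by simpa using ht)
  | succ n ih =>
    by_cases h : t < aySum α n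
    · obtain ⟨k, hk, hkt⟩ := ih h
      exact ⟨k, by omega, hkt⟩
    · exact ⟨n, n.lt_succ_self, not_lt.1 h, htn⟩

lemma ayIdx_eq (hα : 0 ≤ α) (ht : t ∈ Ico (aySum α k) (aySum α (k + 1))) :
    ayIdx α t = k + 1 := by
  refine le_antisymm (Nat.sInf_le ht.2) (le_csInf ⟨_, ht.2⟩ fun j hj => ?_)
  by_contra! hjk
  exact (ht.1.trans_lt hj).not_ge (aySum_mono hα (Nat.le_of_lt_succ hjk))

lemma ayI1_eq_add (hα : 0 ≤ α) (h₁ : aySum α k ≤ t)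
    (h₂ : t + α ^ (k + 1) / 2 < aySum α (k + 1)) : ayI1 α t = t + α ^ (k + 1) / 2 := by
  have hpow : 0 ≤ α ^ (k + 1) := pow_nonneg hα _
  rw [ayI1, ayIdx_eq hα ⟨h₁, by linarith⟩, Nat.add_sub_cancel, if_pos ⟨by linarith, h₂⟩]

lemma ayI1_eq_sub (hα : 0 ≤ α) (h₁ : aySum α k + α ^ (k + 1) / 2 ≤ t)
    (h₂ : t < aySum α (k + 1)) : ayI1 α t = t - α ^ (k + 1) / 2 := by
  have hpow : 0 ≤ α ^ (k + 1) := pow_nonneg hα _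
  have hsucc := aySum_succ α k
  rw [ayI1, ayIdx_eq hα ⟨by linarith, h₂⟩, Nat.add_sub_cancel, if_neg fun h => by linarith [h.2]]

lemma ayI1_mem_Ico (hα : 0 ≤ α) (ht : t ∈ Ico (aySum α k) (aySum α (k + 1))) :
    ayI1 α t ∈ Ico (aySum α k) (aySum α (k + 1)) := by
  have hpow : 0 ≤ α ^ (k + 1) := pow_nonneg hα _
  have hsucc := aySum_succ α k
  rcases lt_or_ge (t + α ^ (k + 1) / 2) (aySum α (k + 1)) with hlow | hup
  · rw [ayI1_eq_add hα ht.1 hlow]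
    exact ⟨by linarith [ht.1], hlow⟩
  · rw [ayI1_eq_sub hα (by linarith) ht.2]
    constructor <;> linarith [ht.2]

lemma ayI1_mul_add (hα : 0 < α) (ht : t ∈ Ico (aySum α k) (aySum α (k + 1))) :
    ayI1 α (α * t + α) = α * ayI1 α t + α := by
  have h₀ := mul_aySum_add α k
  have h₁ := mul_aySum_add α (k + 1)
  have hsucc := aySum_succ α k
  have hsucc' := aySum_succ α (k + 1)
  have hpow : α * α ^ (k + 1) = α ^ (k + 1 + 1) := by ring
  have hlo := mul_le_mul_of_nonneg_left ht.1 hα.le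
  have hhi := mul_lt_mul_of_pos_left ht.2 hα
  rcases lt_or_ge (t + α ^ (k + 1) / 2) (aySum α (k + 1)) with hlow | hup
  · have := mul_lt_mul_of_pos_left hlow hα
    rw [ayI1_eq_add hα.le ht.1 hlow, ayI1_eq_add hα.le (k := k + 1) (by linarith) (by linarith)]
    ring
  · have := mul_le_mul_of_nonneg_left hup hα.le
    rw [ayI1_eq_sub hα.le (by linarith) ht.2,
      ayI1_eq_sub hα.le (k := k + 1) (by linarith) (by linarith)]
    ring

lemma ayIE_of_lt_half (hα : 0 ≤ α) (h₀ : 0 ≤ s) (h : s < α / 2) :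
    ayIE α s = Int.fract (s + α / 2 + 1 / 2) := by
  have hI1 : ayI1 α s = s + α / 2 := by
    simpa using ayI1_eq_add (k := 0) hα (by simpa using h₀) (by simp [aySum]; linarith)
  rw [ayIE, ayI2, hI1]

lemma ayIE_of_half_le (hα₁ : α ≤ 1) (h : α / 2 ≤ s) (h₁ : s < α) :
    ayIE α s = s - α / 2 + 1 / 2 := by
  have hα : 0 ≤ α := by linarith
  have hI1 : ayI1 α s = s - α / 2 := by
    simpa using ayI1_eq_sub (k := 0) hα (by simpa using h) (by simpa [aySum] using h₁)
  rw [ayIE, ayI2, hI1, Int.fract_eq_self]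
  constructor <;> linarith

lemma aySum_eq_inv_sub_one (hsum : aySum α (n + 1) = 1) : aySum α n = α⁻¹ - 1 :=
  eq_sub_of_add_eq <| eq_inv_of_mul_eq_one_left <| by linear_combination mul_aySum_add α n + hsum

lemma pow_succ_eq_two_sub_inv_of_aySum (hsum : aySum α (n + 1) = 1) : α ^ (n + 1) = 2 - α⁻¹ := by
  linear_combination hsum - aySum_succ α n - aySum_eq_inv_sub_one hsum

lemma inv_lt_two_of_aySum (hα : 0 < α) (hsum : aySum α (n + 1) = 1) : α⁻¹ < 2 := by
  linarith [pow_pos hα (n + 1), pow_succ_eq_two_sub_inv_of_aySum hsum]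

lemma one_le_inv_of_aySum (hα : 0 < α) (hsum : aySum α (n + 1) = 1) : 1 ≤ α⁻¹ := by
  linarith [aySum_nonneg hα.le n, aySum_eq_inv_sub_one hsum]

lemma ayPsi_mul_add_sub_half (hα : α ≠ 0) (x : ℝ) : ayPsi α (α * x + α - 1 / 2) = ayI2 x := by
  rw [ayPsi, ayI2]
  congr 1
  field_simp
  ring

lemma ayPsi_ayIE_mul_add (hα : 0 < α) (hsum : aySum α (n + 1) = 1) {u : ℝ} (hu₀ : 0 ≤ u)
    (hu : u < aySum α n) : ayPsi α (ayIE α (α * u + α)) = ayIE α u := by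
  obtain ⟨k, hkn, huk⟩ := exists_mem_Ico_aySum hu₀ hu
  have hx := ayI1_mem_Ico hα.le huk
  have hx₀ : 0 ≤ ayI1 α u := (aySum_nonneg hα.le k).trans hx.1
  have hαx := mul_lt_mul_of_pos_left (hx.2.trans_le (aySum_mono hα.le hkn)) hα
  have hhalf : 2⁻¹ < α := (inv_lt_comm₀ hα two_pos).1 (inv_lt_two_of_aySum hα hsum)
  have hIE : ayIE α (α * u + α) = α * ayI1 α u + α - 1 / 2 := by
    rw [ayIE, ayI1_mul_add hα huk, ayI2, Int.fract_eq_sub_one] <;>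
      linarith [mul_aySum_add α n, mul_nonneg hα.le hx₀]
  rw [hIE, ayPsi_mul_add_sub_half hα.ne']
  rfl

lemma ayIE_eq_mul_ayPsi_add (hα : 0 < α) (hsum : aySum α (n + 1) = 1) (hs : s ∈ Ico 0 α)
    (hret : α ≤ ayIE α s) : ayPsi α s < aySum α n ∧ ayIE α s = α * ayPsi α s + α := by
  obtain ⟨hs₀, hs₁⟩ := hs
  have hαβ : α * α⁻¹ = 1 := mul_inv_cancel₀ hα.ne'
  have hβ₂ := inv_lt_two_of_aySum hα hsum
  have hα₁ : α ≤ 1 := (one_le_inv₀ hα).1 (one_le_inv_of_aySum hα hsum)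
  have hβs := mul_nonneg (inv_nonneg.2 hα.le) hs₀
  rw [aySum_eq_inv_sub_one hsum, ayPsi]
  rcases lt_or_ge s (α / 2) with hlow | hup
  · have hIE := ayIE_of_lt_half hα.le hs₀ hlow
    have hs' : s < (1 - α) / 2 := by
      by_contra! h
      rw [hIE, Int.fract_eq_sub_one (by linarith) (by linarith)] at hret
      linarith
    have := mul_lt_mul_of_pos_left hs' (inv_pos.2 hα)
    rw [hIE, Int.fract_eq_self.2 ⟨by linarith, by linarith⟩,
      Int.fract_eq_self.2 ⟨by linarith, by linarith⟩]
    exact ⟨by linarith, by linear_combination (-s - 1 / 2) * hαβ⟩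
  · have hIE := ayIE_of_half_le hα₁ hup hs₁
    have := mul_le_mul_of_nonneg_left (hret.trans_eq hIE) (inv_nonneg.2 hα.le)
    have := mul_lt_mul_of_pos_left hs₁ (inv_pos.2 hα)
    rw [hIE, Int.fract_eq_sub_one (by linarith) (by linarith)]
    exact ⟨by linarith, by linear_combination (-s - 1 / 2) * hαβ⟩

lemma ayPsi_ayIE_of_ayIE_lt (hα : 0 < α) (hsum : aySum α (n + 1) = 1) (hs : s ∈ Ico 0 α)
    (hret : ayIE α s < α) : ayPsi α (ayIE α s) = ayIE α (ayPsi α s) := by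
  obtain ⟨hs₀, hs₁⟩ := hs
  have hαβ : α * α⁻¹ = 1 := mul_inv_cancel₀ hα.ne'
  have hβ₂ := inv_lt_two_of_aySum hα hsum
  have hβ₁ := one_le_inv_of_aySum hα hsum
  have hα₁ : α ≤ 1 := (one_le_inv₀ hα).1 hβ₁
  have hβs := mul_nonneg (inv_nonneg.2 hα.le) hs₀
  have hJ := aySum_eq_inv_sub_one hsum
  have hpow := pow_succ_eq_two_sub_inv_of_aySum hsum
  rcases lt_or_ge s (α / 2) with hlow | hup
  · have hIE := ayIE_of_lt_half hα.le hs₀ hlow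
    have hs' : (1 - α) / 2 ≤ s := by
      by_contra! h
      rw [hIE, Int.fract_eq_self.2 ⟨by linarith, by linarith⟩] at hret
      linarith
    have := mul_le_mul_of_nonneg_left hs' (inv_nonneg.2 hα.le)
    have := mul_lt_mul_of_pos_left hlow (inv_pos.2 hα)
    have hψ : ayPsi α s = α⁻¹ * s + (α⁻¹ - 1) / 2 :=
      Int.fract_eq_self.2 ⟨by linarith, by linarith⟩
    rw [hIE, Int.fract_eq_sub_one (by linarith) (by linarith), hψ, ayIE,
      ayI1_eq_add (k := n) hα.le (by linarith) (by linarith), ayPsi, ayI2, Int.fract_eq_fract]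
    exact ⟨-1, by push_cast; linear_combination (1 / 2) * hαβ - hpow / 2⟩
  · have hIE := ayIE_of_half_le hα₁ hup hs₁
    rw [hIE] at hret ⊢
    have := mul_le_mul_of_nonneg_left hup (inv_nonneg.2 hα.le)
    have := mul_lt_mul_of_pos_left hret (inv_pos.2 hα)
    have hψ : ayPsi α s = α⁻¹ * s + (α⁻¹ - 1) / 2 :=
      Int.fract_eq_self.2 ⟨by linarith, by linarith⟩
    rw [hψ, ayIE, ayI1_eq_sub (k := n) hα.le (by linarith) (by linarith), ayPsi, ayI2,
      Int.fract_eq_fract]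
    exact ⟨0, by push_cast; linear_combination (-1 / 2) * hαβ + hpow / 2⟩

end ArnouxYoccoz

theorem arnoux_yoccoz_renormalization_general (g : ℕ) (α : ℝ) (hα0 : 0 < α)
    (hsum : ∑ k ∈ Finset.Icc 1 g, α ^ k = 1)
    (s : ℝ) (hs : s ∈ Set.Ico (0 : ℝ) α) :
    ayPsi α (ayIEhat α s) = ayIE α (ayPsi α s) := by
  obtain ⟨n, rfl⟩ : ∃ n, g = n + 1 :=
    Nat.exists_eq_succ_of_ne_zero (by rintro rfl; simp at hsum)
  change aySum α (n + 1) = 1 at hsum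
  rw [ayIEhat]
  split_ifs with hret
  · exact ayPsi_ayIE_of_ayIE_lt hα0 hsum hs hret
  · obtain ⟨hψ, hIE⟩ := ayIE_eq_mul_ayPsi_add hα0 hsum hs (not_lt.1 hret)
    rw [hIE]
    exact ayPsi_ayIE_mul_add hα0 hsum (Int.fract_nonneg _) hψ

/-- Renormalization of the Arnoux–Yoccoz interval exchange (Arnoux–Yoccoz):
for every `s ∈ [0, α)`, `ψ(ĨE(s)) = IE(ψ(s))`. -/
theorem arnoux_yoccoz_renormalization (g : ℕ) (hg : 2 ≤ g) (α : ℝ) (hα0 : 0 < α) (hα1 : α < 1)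
    (hsum : ∑ k ∈ Finset.Icc 1 g, α ^ k = 1)
    (s : ℝ) (hs : s ∈ Set.Ico (0 : ℝ) α) :
    ayPsi α (ayIEhat α s) = ayIE α (ayPsi α s) :=
  arnoux_yoccoz_renormalization_general g α hα0 hsum s hs
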